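/- arXiv:1308.3619 — 2 statements merged into one kernel-verified Lean document; each statement's English description precedes it below -/
import Mathlib

section
/- For each n ≥ 0 and k ≥ 2, the list F(n,k) defined by F(n,k) = C(n) for 0 ≤ n < k, and F(n,k) = 1·reverse(F(n-1,k)) ∘ 01·reverse(F(n-2,k)) ∘ ... ∘ 0^(k-1)1·reverse(F(n-k,k)) for n ≥ k, is a Gray code: consecutive strings in the list differ in exactly one position. -/
/-- Hamming distance between two (equal-length) strings. -/
def hamming {α : Type*} [DecidableEq α] (u v : List α) : ℕ :=
  (List.zip u v).countP (fun p => decide (p.1 ≠ p.2))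

/-- The binary reflected Gray code `C(n)` (strings over `{0,1} ⊆ ℕ`):
`C(0) = (λ)`, `C(n) = 1·reverse(C(n-1)) ∘ 0·C(n-1)`. -/
def C : ℕ → List (List ℕ)
  | 0 => [[]]
  | n+1 => (C n).reverse.map (fun w => 1 :: w) ++ (C n).map (fun w => 0 :: w)

/-- The Gray code list `F(n,k)` of binary strings avoiding `k` consecutive `0`'s:
`F(n,k) = C(n)` for `n < k`, and for `n ≥ k`,
`F(n,k) = 1·reverse(F(n-1,k)) ∘ 01·reverse(F(n-2,k)) ∘ ⋯ ∘ 0^(k-1)1·reverse(F(n-k,k))`. -/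
def F (k : ℕ) : ℕ → List (List ℕ)
  | n =>
    if h : n < k ∨ k = 0 then C n
    else ((List.range k).map (fun j =>
      (F k (n - (j+1))).reverse.map (fun w => List.replicate j 0 ++ 1 :: w))).flatten
termination_by n => n
decreasing_by push_neg at h; omega

/-!
For `n ≥ 1`, both `C(n)` and `F(n,k)` start with `1` followed by the last string of their
predecessor list. Hence, in `F(n,k)`, the last string `0^j 1 · first(F(n-j-1,k))` of the
`j`-th block equals `0^j 11 · last(F(n-j-2,k))`, while the first string of the next block
is `0^(j+1) 1 · last(F(n-j-2,k))`: they differ only at position `j`. Inside the blocks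
the Gray property is inherited from the shorter lists, since reversing a list and
prepending a fixed prefix preserve Hamming distances.
-/

section Hamming

variable {α : Type*} [DecidableEq α]

theorem hamming_comm (u v : List α) : hamming u v = hamming v u := by
  unfold hamming
  rw [← List.zip_swap v u, List.countP_map]
  congr 1
  funext p
  simp [eq_comm]

@[simp]
theorem hamming_cons_cons (a : α) (u v : List α) :
    hamming (a :: u) (a :: v) = hamming u v := by
  simp [hamming]

@[simp]
theorem hamming_append_left (p u v : List α) :
    hamming (p ++ u) (p ++ v) = hamming u v := by
  induction p with
  | nil => rfl
  | cons a p ih => simpa using ih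

theorem hamming_self (u : List α) : hamming u u = 0 := by
  induction u with
  | nil => rfl
  | cons a u ih => rwa [hamming_cons_cons]

theorem hamming_cons_cons_of_ne {a b : α} (h : a ≠ b) (u : List α) :
    hamming (a :: u) (b :: u) = 1 := by
  have h₀ := hamming_self u
  unfold hamming at h₀ ⊢
  rw [List.zip_cons_cons, List.countP_cons, h₀]
  simp [h]

end Hamming

def IsGrayCode {α : Type*} [DecidableEq α] (L : List (List α)) : Prop :=
  L.IsChain (fun u v => hamming u v = 1)

namespace IsGrayCode

variable {α : Type*} [DecidableEq α] {L : List (List α)}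

theorem reverse (h : IsGrayCode L) : IsGrayCode L.reverse :=
  List.isChain_reverse.2 <| List.IsChain.imp (fun u v huv => by rwa [hamming_comm]) h

theorem map {f : List α → List α} (hf : ∀ u v, hamming (f u) (f v) = hamming u v)
    (h : IsGrayCode L) : IsGrayCode (L.map f) :=
  (List.isChain_map f).2 <| List.IsChain.imp (fun u v huv => by rwa [hf]) h

end IsGrayCode

theorem C_ne_nil (n : ℕ) : C n ≠ [] := by
  induction n with
  | zero => simp [C]
  | succ n ih => simp [C, ih]

theorem head?_C_succ (n : ℕ) : (C (n + 1)).head? = (C n).getLast?.map (1 :: ·) := by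
  rw [C, List.head?_append_of_ne_nil _ (by simp [C_ne_nil]), List.head?_map,
    List.head?_reverse]

theorem isGrayCode_C (n : ℕ) : IsGrayCode (C n) := by
  induction n with
  | zero => exact List.isChain_singleton _
  | succ n ih =>
    refine List.IsChain.append (ih.reverse.map (hamming_cons_cons 1))
      (ih.map (hamming_cons_cons 0)) ?_
    rintro x hx y hy
    rw [List.getLast?_map, List.getLast?_reverse] at hx
    rw [List.head?_map] at hy
    obtain ⟨w, hw, rfl⟩ := Option.mem_map.1 hx
    obtain ⟨w', hw', rfl⟩ := Option.mem_map.1 hy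
    obtain rfl := Option.mem_unique hw' hw
    exact hamming_cons_cons_of_ne one_ne_zero _

theorem F_eq_C {k n : ℕ} (h : n < k ∨ k = 0) : F k n = C n := by
  rw [F, dif_pos h]

/-- The block `0^j 1 · reverse(F(n-j-1,k))` of `F(n,k)`. -/
def block (k n j : ℕ) : List (List ℕ) :=
  (F k (n - (j + 1))).reverse.map (List.replicate j 0 ++ 1 :: ·)

theorem F_eq_flatten_block {k n : ℕ} (hk : k ≠ 0) (h : k ≤ n) :
    F k n = ((List.range k).map (block k n)).flatten := by
  rw [F, dif_neg (by omega)]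
  rfl

theorem F_ne_nil (k n : ℕ) : F k n ≠ [] := by
  induction n using Nat.strong_induction_on with
  | _ n ih =>
    by_cases h : n < k ∨ k = 0
    · rw [F_eq_C h]
      exact C_ne_nil n
    · obtain ⟨K, rfl⟩ : ∃ K, k = K + 1 := Nat.exists_eq_succ_of_ne_zero (by omega)
      rw [F_eq_flatten_block (by omega) (by omega), List.range_succ_eq_map]
      simp [block, ih (n - 1) (by omega)]

theorem head?_F_succ (k n : ℕ) : (F k (n + 1)).head? = (F k n).getLast?.map (1 :: ·) := by
  by_cases h : n + 1 < k ∨ k = 0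
  · rw [F_eq_C h, F_eq_C (by omega), head?_C_succ]
  · obtain ⟨K, rfl⟩ : ∃ K, k = K + 1 := Nat.exists_eq_succ_of_ne_zero (by omega)
    rw [F_eq_flatten_block (by omega) (by omega), List.range_succ_eq_map, List.map_cons,
      List.flatten_cons, List.head?_append_of_ne_nil _ (by simp [block, F_ne_nil])]
    simp [block, List.head?_reverse]

theorem isGrayCode_block {k n : ℕ} (j : ℕ) (h : IsGrayCode (F k (n - (j + 1)))) :
    IsGrayCode (block k n j) :=
  h.reverse.map fun u v => by simp

theorem hamming_getLast?_block_head?_block_succ {k n j : ℕ} (hj : j + 2 ≤ n) :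
    ∀ x ∈ (block k n j).getLast?, ∀ y ∈ (block k n (j + 1)).head?, hamming x y = 1 := by
  obtain ⟨m, rfl⟩ : ∃ m, n = m + (j + 2) := ⟨n - (j + 2), by omega⟩
  have hm : m + (j + 2) - (j + 1) = m + 1 := by omega
  rintro x hx y hy
  simp only [block, List.getLast?_map, List.getLast?_reverse, List.head?_map,
    List.head?_reverse, hm, head?_F_succ, Nat.add_sub_cancel, Option.map_map] at hx hy
  obtain ⟨w, hw, rfl⟩ := Option.mem_map.1 hx
  obtain ⟨w', hw', rfl⟩ := Option.mem_map.1 hy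
  obtain rfl := Option.mem_unique hw' hw
  rw [List.replicate_succ', List.append_assoc, Function.comp_apply, hamming_append_left]
  exact hamming_cons_cons_of_ne one_ne_zero _

theorem isGrayCode_F (k n : ℕ) : IsGrayCode (F k n) := by
  induction n using Nat.strong_induction_on with
  | _ n ih =>
    by_cases h : n < k ∨ k = 0
    · rw [F_eq_C h]
      exact isGrayCode_C n
    · obtain ⟨K, rfl⟩ : ∃ K, k = K + 1 := Nat.exists_eq_succ_of_ne_zero (by omega)
      rw [F_eq_flatten_block (by omega) (by omega)]
      have blocks_ne_nil : [] ∉ (List.range (K + 1)).map (block (K + 1) n) := by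
        simp [block, F_ne_nil]
      refine (List.isChain_flatten blocks_ne_nil).2 ⟨?_, ?_⟩
      · simp only [List.mem_map, List.mem_range]
        rintro _ ⟨j, hj, rfl⟩
        exact isGrayCode_block j (ih _ (by omega))
      · refine (List.isChain_map _).2 <| (List.isChain_range_succ _ K).2 fun j hj => ?_
        exact hamming_getLast?_block_head?_block_succ (by omega)

theorem stmt12_general (k n : ℕ) :
    List.Chain' (fun u v => hamming u v = 1) (F k n) :=
  isGrayCode_F k n

/-- `F(n,k)` is a Gray code: consecutive strings differ in exactly one position. -/
theorem stmt12 (k n : ℕ) (hk : 2 ≤ k) :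
    List.Chain' (fun u v => hamming u v = 1) (F k n) :=
  stmt12_general k n
end

section
/- The number of strings in the list F(n,k) equals the (n+k)-th k-generalized Fibonacci number f^(k)_{n+k}, where f^(k)_i = 0 for 0 ≤ i ≤ k-2, f^(k)_{k-1} = 1, and f^(k)_m = f^(k)_{m-1} + ... + f^(k)_{m-k} for m ≥ k. -/
/-- The `k`-generalized Fibonacci numbers: `f⁽ᵏ⁾ᵢ = 0` for `i ≤ k-2`,
`f⁽ᵏ⁾_{k-1} = 1`, and `f⁽ᵏ⁾ₘ = f⁽ᵏ⁾_{m-1} + ⋯ + f⁽ᵏ⁾_{m-k}` for `m ≥ k`. -/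
def gfib (k : ℕ) : ℕ → ℕ
  | m =>
    if h : m < k ∨ k = 0 then (if m = k - 1 then 1 else 0)
    else ((List.range k).map (fun j => gfib k (m - (j+1)))).sum
termination_by m => m
decreasing_by push_neg at h; omega

open Finset

theorem length_C (n : ℕ) : (C n).length = 2 ^ n := by
  induction n with
  | zero => rfl
  | succ n ih => simp [C, ih, pow_succ, mul_two]

section

variable {k n : ℕ}

theorem F_of_lt (h : n < k) : F k n = C n := by
  rw [F, dif_pos (Or.inl h)]

theorem length_F_of_le (hk : k ≠ 0) (h : k ≤ n) :
    (F k n).length = ∑ j ∈ range k, (F k (n - (j + 1))).length := by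
  rw [F, dif_neg (by omega)]
  simp only [List.length_flatten, List.map_map, Function.comp_def, List.length_map,
    List.length_reverse]
  rfl

theorem gfib_of_lt (h : n < k) : gfib k n = if n = k - 1 then 1 else 0 := by
  rw [gfib, dif_pos (Or.inl h)]

theorem gfib_of_le (hk : k ≠ 0) (h : k ≤ n) :
    gfib k n = ∑ j ∈ range k, gfib k (n - (j + 1)) := by
  rw [gfib, dif_neg (by omega)]
  rfl

theorem gfib_add_self_of_lt (hn : n < k) : gfib k (n + k) = 2 ^ n := by
  induction n using Nat.strong_induction_on with
  | _ n ih =>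
    have hzero : ∑ j ∈ Ico (n + 1) k, gfib k (n + k - (j + 1)) = 0 :=
      sum_eq_zero fun j hj => by
        rw [mem_Ico] at hj
        rw [gfib_of_lt (by omega), if_neg (by omega)]
    have hpow : ∑ j ∈ range n, gfib k (n + k - (j + 1)) = ∑ j ∈ range n, 2 ^ (n - 1 - j) :=
      sum_congr rfl fun j hj => by
        rw [mem_range] at hj
        rw [show n + k - (j + 1) = n - 1 - j + k by omega, ih _ (by omega) (by omega)]
    have hone : gfib k (n + k - (n + 1)) = 1 := by
      rw [gfib_of_lt (by omega), if_pos (by omega)]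
    calc gfib k (n + k)
        = ∑ j ∈ range n, gfib k (n + k - (j + 1)) + gfib k (n + k - (n + 1)) := by
          rw [gfib_of_le (by omega) (by omega), ← sum_range_add_sum_Ico _ (by omega : n + 1 ≤ k),
            hzero, add_zero, sum_range_succ]
      _ = ∑ i ∈ range n, 2 ^ i + 1 := by rw [hpow, hone, sum_range_reflect (2 ^ ·) n]
      _ = 2 ^ n := by
          rw [Nat.geomSum_eq le_rfl]
          have := n.one_le_two_pow
          omega

end

/-- The number of strings in `F(n,k)` equals the `(n+k)`-th `k`-generalized
Fibonacci number. -/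
theorem stmt13 (k n : ℕ) (hk : 2 ≤ k) :
    (F k n).length = gfib k (n + k) := by
  induction n using Nat.strong_induction_on with
  | _ n ih =>
    rcases lt_or_ge n k with hn | hn
    · rw [F_of_lt hn, length_C, gfib_add_self_of_lt hn]
    · rw [length_F_of_le (by omega) hn, gfib_of_le (by omega) (by omega)]
      refine sum_congr rfl fun j hj => ?_
      rw [mem_range] at hj
      rw [ih _ (by omega), show n + k - (j + 1) = n - (j + 1) + k by omega]
end
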